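/- arXiv:1705.01447 — 2 statements merged into one kernel-verified Lean document; each statement's English description precedes it below -/
import Mathlib

section
/- Let R₁₂ be invertible on V⊗V satisfying QYBE and R₁₂^T = R₂₁. Suppose M is a matrix with entries in a (possibly noncommutative) algebra satisfying R₁₂^T M₁ R₁₂^{-T} M₂ = M₂ R₁₂^{-1} M₁ R₁₂ (where M₁ = M⊗1, M₂ = 1⊗M). Then M also satisfies M₁ R₁₂^{-T} M₂ R₁₂^T = R₁₂ M₂ R₁₂^{-1} M₁ if and only if R₁₂^T R₁₂ M₂ R₁₂^{-1} M₁ = M₂ R₁₂^{-1} M₁ R₁₂ R₁₂^T. -/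
open Matrix

variable {n : ℕ}

/-- `R₁₂` on `V⊗V⊗V`. -/
def lift12 (R : Matrix (Fin n × Fin n) (Fin n × Fin n) ℂ) :
    Matrix (Fin n × Fin n × Fin n) (Fin n × Fin n × Fin n) ℂ :=
  fun p q => R (p.1, p.2.1) (q.1, q.2.1) * (if p.2.2 = q.2.2 then 1 else 0)

/-- `R₁₃` on `V⊗V⊗V`. -/
def lift13 (R : Matrix (Fin n × Fin n) (Fin n × Fin n) ℂ) :
    Matrix (Fin n × Fin n × Fin n) (Fin n × Fin n × Fin n) ℂ :=
  fun p q => R (p.1, p.2.2) (q.1, q.2.2) * (if p.2.1 = q.2.1 then 1 else 0)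

/-- `R₂₃` on `V⊗V⊗V`. -/
def lift23 (R : Matrix (Fin n × Fin n) (Fin n × Fin n) ℂ) :
    Matrix (Fin n × Fin n × Fin n) (Fin n × Fin n × Fin n) ℂ :=
  fun p q => R (p.2.1, p.2.2) (q.2.1, q.2.2) * (if p.1 = q.1 then 1 else 0)

/-- `R₂₁`, i.e. `R` with both tensor factors flipped. -/
def flipR (R : Matrix (Fin n × Fin n) (Fin n × Fin n) ℂ) :
    Matrix (Fin n × Fin n) (Fin n × Fin n) ℂ :=
  fun p q => R (p.2, p.1) (q.2, q.1)

variable {A : Type*} [Ring A] [Algebra ℂ A]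

/-- `M₁ = M ⊗ Id` for a matrix `M` with entries in a (noncommutative) algebra `A`. -/
def leg1 (M : Matrix (Fin n) (Fin n) A) : Matrix (Fin n × Fin n) (Fin n × Fin n) A :=
  fun p q => if p.2 = q.2 then M p.1 q.1 else 0

/-- `M₂ = Id ⊗ M`. -/
def leg2 (M : Matrix (Fin n) (Fin n) A) : Matrix (Fin n × Fin n) (Fin n × Fin n) A :=
  fun p q => if p.1 = q.1 then M p.2 q.2 else 0

/-- Scalar matrices over `ℂ` viewed with entries in `A`. -/
def scal (R : Matrix (Fin n × Fin n) (Fin n × Fin n) ℂ) :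
    Matrix (Fin n × Fin n) (Fin n × Fin n) A :=
  R.map (algebraMap ℂ A)


lemma aux_ring {B : Type*} [Ring B] (s s' t t' m1 m2 : B)
    (hs : s * s' = 1) (hs' : s' * s = 1) (htt : t * t' = 1)
    (hH : s * m1 * s' * m2 = m2 * t' * m1 * t) :
    (m1 * s' * m2 * s = t * m2 * t' * m1) ↔
    (s * t * m2 * t' * m1 = m2 * t' * m1 * t * s) := by
  have key : m1 * s' * m2 = s' * (m2 * t' * m1 * t) := by
    calc m1 * s' * m2 = (s' * s) * m1 * s' * m2 := by rw [hs', one_mul]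
    _ = s' * (s * m1 * s' * m2) := by simp [mul_assoc]
    _ = s' * (m2 * t' * m1 * t) := by rw [hH]
  constructor
  · intro h
    calc s * t * m2 * t' * m1 = s * (t * m2 * t' * m1) := by simp [mul_assoc]
    _ = s * (m1 * s' * m2 * s) := by rw [h]
    _ = s * (m1 * s' * m2) * s := by simp [mul_assoc]
    _ = s * (s' * (m2 * t' * m1 * t)) * s := by rw [key]
    _ = (s * s') * (m2 * t' * m1 * t * s) := by simp [mul_assoc]
    _ = m2 * t' * m1 * t * s := by rw [hs, one_mul]
  · intro h
    calc m1 * s' * m2 * s = s' * (m2 * t' * m1 * t) * s := by rw [key]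
    _ = s' * (m2 * t' * m1 * t * s) := by simp [mul_assoc]
    _ = s' * (s * t * m2 * t' * m1) := by rw [← h]
    _ = (s' * s) * (t * m2 * t' * m1) := by simp [mul_assoc]
    _ = t * m2 * t' * m1 := by rw [hs', one_mul]

lemma scal_mul {A : Type*} [Ring A] [Algebra ℂ A]
    (X Y : Matrix (Fin n × Fin n) (Fin n × Fin n) ℂ) :
    (scal (X * Y) : Matrix (Fin n × Fin n) (Fin n × Fin n) A) = scal X * scal Y :=
  Matrix.map_mul

lemma scal_one {A : Type*} [Ring A] [Algebra ℂ A] :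
    (scal (1 : Matrix (Fin n × Fin n) (Fin n × Fin n) ℂ) :
      Matrix (Fin n × Fin n) (Fin n × Fin n) A) = 1 :=
  Matrix.map_one _ (map_zero _) (map_one _)

/-- Let `R` be invertible, satisfy the QYBE and `R₁₂ᵀ = R₂₁`, and
let `M` (entries in a possibly noncommutative algebra) satisfy
`R₁₂ᵀ M₁ R₁₂^{-T} M₂ = M₂ R₁₂⁻¹ M₁ R₁₂`.  Then the relation
`M₁ R₁₂^{-T} M₂ R₁₂ᵀ = R₁₂ M₂ R₁₂⁻¹ M₁` holds if and only if
`R₁₂ᵀ R₁₂ M₂ R₁₂⁻¹ M₁ = M₂ R₁₂⁻¹ M₁ R₁₂ R₁₂ᵀ`. -/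
theorem H_H1_equivalence (R : Matrix (Fin n × Fin n) (Fin n × Fin n) ℂ)
    (hinv : IsUnit R.det)
    (hQYBE : lift12 R * lift13 R * lift23 R = lift23 R * lift13 R * lift12 R)
    (hT : Rᵀ = flipR R)
    (M : Matrix (Fin n) (Fin n) A)
    (hH : scal Rᵀ * leg1 M * scal (Rᵀ)⁻¹ * leg2 M =
      leg2 M * scal R⁻¹ * leg1 M * scal R) :
    (leg1 M * scal (Rᵀ)⁻¹ * leg2 M * scal Rᵀ =
        scal R * leg2 M * scal R⁻¹ * leg1 M) ↔
    (scal Rᵀ * scal R * leg2 M * scal R⁻¹ * leg1 M =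
        leg2 M * scal R⁻¹ * leg1 M * scal R * scal Rᵀ) := by
  have hinvT : IsUnit (Rᵀ).det := by rwa [Matrix.det_transpose]
  have hs : (scal Rᵀ : Matrix (Fin n × Fin n) (Fin n × Fin n) A) * scal (Rᵀ)⁻¹ = 1 := by
    rw [← scal_mul, Matrix.mul_nonsing_inv _ hinvT, scal_one]
  have hs' : (scal (Rᵀ)⁻¹ : Matrix (Fin n × Fin n) (Fin n × Fin n) A) * scal Rᵀ = 1 := by
    rw [← scal_mul, Matrix.nonsing_inv_mul _ hinvT, scal_one]
  have htt : (scal R : Matrix (Fin n × Fin n) (Fin n × Fin n) A) * scal R⁻¹ = 1 := by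
    rw [← scal_mul, Matrix.mul_nonsing_inv _ hinv, scal_one]
  exact aux_ring (scal Rᵀ) (scal (Rᵀ)⁻¹) (scal R) (scal R⁻¹) (leg1 M) (leg2 M)
    hs hs' htt hH
end

section
/- Let M_{(1)}, M_{(2)}, M_{(3)} be k×k matrices over a noncommutative algebra satisfying the relations (M_{(i)})₁ R₁₂ (M_{(j)})₂ R₁₂^{-1} = R₁₂ (M_{(j)})₂ R₁₂^{-1} (M_{(i)})₁ for i < j, and (M_{(i)})₁ R₁₂^{-T} (M_{(i)})₂ R₁₂^T = R₁₂ (M_{(i)})₂ R₁₂^{-1} (M_{(i)})₁ for each i, where R = R₁₂(q) is the Kulish–Sklyanin matrix. Then the IHX-type identity holds: (M_{(1)}M_{(2)})₁ R₁₂^{-T} (M_{(2)}M_{(3)})₂ = q R₁₂ (M_{(2)}M_{(3)})₂ R₁₂^{-1} (M_{(1)}M_{(2)})₁ R₁₂ − (q^{3/2} − q^{-1/2}) R₁₂ (M_{(2)})₂ R₁₂^{-1} (M_{(1)}M_{(2)}M_{(3)})₁ P₁₂. -/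
open Matrix

/-- The Kulish–Sklyanin R-matrix on `ℂ^n ⊗ ℂ^n`, in terms of `s = q^{1/2}`. -/
noncomputable def KS (n : ℕ) (s : ℂ) : Matrix (Fin n × Fin n) (Fin n × Fin n) ℂ :=
  fun p q =>
    (if p = q then s⁻¹ else 0) +
    (if p = q ∧ p.1 = p.2 then s - s⁻¹ else 0) +
    (if p.1 < p.2 ∧ q.1 = p.2 ∧ q.2 = p.1 then s - s⁻¹ ^ 3 else 0)

/-- The permutation (flip) matrix `P₁₂`. -/
def Pmat (n : ℕ) : Matrix (Fin n × Fin n) (Fin n × Fin n) ℂ :=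
  fun p q => if p.1 = q.2 ∧ p.2 = q.1 then 1 else 0

variable {n : ℕ} {A : Type*} [Ring A] [Algebra ℂ A]

namespace IHXaux

def Em (n : ℕ) : Matrix (Fin n × Fin n) (Fin n × Fin n) ℂ :=
  Matrix.diagonal fun p => if p.1 = p.2 then 1 else 0

def Fm (n : ℕ) : Matrix (Fin n × Fin n) (Fin n × Fin n) ℂ :=
  fun p q => if p.1 < p.2 ∧ q.1 = p.2 ∧ q.2 = p.1 then 1 else 0

def Gm (n : ℕ) : Matrix (Fin n × Fin n) (Fin n × Fin n) ℂ :=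
  fun p q => if p.2 < p.1 ∧ q.1 = p.2 ∧ q.2 = p.1 then 1 else 0

theorem KS_eq (n : ℕ) (s : ℂ) :
    KS n s = s⁻¹ • (1 : Matrix (Fin n × Fin n) (Fin n × Fin n) ℂ)
      + (s - s⁻¹) • Em n + (s - s⁻¹ ^ 3) • Fm n := by
  ext ⟨a,b⟩ ⟨c,d⟩
  simp only [KS, Em, Fm, Matrix.add_apply, Matrix.smul_apply, Matrix.one_apply,
    Matrix.diagonal_apply, smul_eq_mul, Prod.mk.injEq, mul_ite, mul_one, mul_zero]
  split_ifs <;> first | ring1 | (exfalso; omega)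

theorem Fm_transpose (n : ℕ) : (Fm n)ᵀ = Gm n := by
  ext ⟨a,b⟩ ⟨c,d⟩
  simp only [Matrix.transpose_apply, Fm, Gm]
  split_ifs <;> first | rfl | (exfalso; omega)

theorem Em_transpose (n : ℕ) : (Em n)ᵀ = Em n := by
  simp [Em, Matrix.diagonal_transpose]

theorem Em_mul_Em (n : ℕ) : Em n * Em n = Em n := by
  rw [Em, Matrix.diagonal_mul_diagonal]
  ext p q
  simp only [Matrix.diagonal_apply]
  split_ifs <;> ring

theorem Em_mul_Fm (n : ℕ) : Em n * Fm n = 0 := by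
  ext p q
  simp only [Em, Fm, Matrix.diagonal_mul, Matrix.zero_apply, Matrix.of_apply, ite_mul, one_mul,
    zero_mul]
  split_ifs <;> first | rfl | (exfalso; omega)

theorem Fm_mul_Em (n : ℕ) : Fm n * Em n = 0 := by
  ext p q
  simp only [Em, Fm, Matrix.mul_diagonal, Matrix.zero_apply, Matrix.of_apply, mul_ite, mul_one,
    mul_zero, ite_mul, one_mul, zero_mul]
  split_ifs <;> first | rfl | (exfalso; omega)

theorem Fm_mul_Fm (n : ℕ) : Fm n * Fm n = 0 := by
  ext p q
  simp only [Matrix.mul_apply, Fm, Matrix.zero_apply]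
  apply Finset.sum_eq_zero
  intro r _
  split_ifs <;> first | ring1 | (exfalso; omega)

theorem Em_mul_Gm (n : ℕ) : Em n * Gm n = 0 := by
  ext p q
  simp only [Em, Gm, Matrix.diagonal_mul, Matrix.zero_apply, Matrix.of_apply, ite_mul, one_mul,
    zero_mul]
  split_ifs <;> first | rfl | (exfalso; omega)

theorem Gm_mul_Em (n : ℕ) : Gm n * Em n = 0 := by
  ext p q
  simp only [Em, Gm, Matrix.mul_diagonal, Matrix.zero_apply, Matrix.of_apply, mul_ite, mul_one,
    mul_zero, ite_mul, one_mul, zero_mul]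
  split_ifs <;> first | rfl | (exfalso; omega)

theorem Gm_mul_Gm (n : ℕ) : Gm n * Gm n = 0 := by
  ext p q
  simp only [Matrix.mul_apply, Gm, Matrix.zero_apply]
  apply Finset.sum_eq_zero
  intro r _
  split_ifs <;> first | ring1 | (exfalso; omega)

theorem P_eq (n : ℕ) : Pmat n = Em n + Fm n + Gm n := by
  ext ⟨a,b⟩ ⟨c,d⟩
  simp only [Pmat, Em, Fm, Gm, Matrix.add_apply, Matrix.diagonal_apply, Prod.mk.injEq]
  split_ifs <;> first | ring1 | (exfalso; omega)



noncomputable def Cm (n : ℕ) (s : ℂ) : Matrix (Fin n × Fin n) (Fin n × Fin n) ℂ :=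
  s • 1 + (s⁻¹ - s) • Em n + (s⁻¹ - s ^ 3) • Fm n

noncomputable def Dm (n : ℕ) (s : ℂ) : Matrix (Fin n × Fin n) (Fin n × Fin n) ℂ :=
  s • 1 + (s⁻¹ - s) • Em n + (s⁻¹ - s ^ 3) • Gm n

theorem KS_mul_Cm (n : ℕ) (s : ℂ) (hs : s ≠ 0) : KS n s * Cm n s = 1 := by
  rw [KS_eq, Cm]
  simp only [add_mul, mul_add, smul_mul_assoc, mul_smul_comm, one_mul, mul_one,
    Em_mul_Em, Em_mul_Fm, Fm_mul_Em, Fm_mul_Fm, smul_zero, add_zero, smul_smul]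
  match_scalars <;> field_simp <;> ring

theorem KS_inv (n : ℕ) (s : ℂ) (hs : s ≠ 0) : (KS n s)⁻¹ = Cm n s :=
  inv_eq_right_inv (KS_mul_Cm n s hs)

theorem Cm_mul_KS (n : ℕ) (s : ℂ) (hs : s ≠ 0) : Cm n s * KS n s = 1 :=
  mul_eq_one_comm.mp (KS_mul_Cm n s hs)

theorem KS_transpose_eq (n : ℕ) (s : ℂ) :
    (KS n s)ᵀ = s⁻¹ • (1 : Matrix (Fin n × Fin n) (Fin n × Fin n) ℂ)
      + (s - s⁻¹) • Em n + (s - s⁻¹ ^ 3) • Gm n := by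
  rw [show KS n s = (KS n s) from rfl, KS_eq]
  simp only [Matrix.transpose_add, Matrix.transpose_smul, Matrix.transpose_one,
    Em_transpose, Fm_transpose]

theorem KST_mul_Dm (n : ℕ) (s : ℂ) (hs : s ≠ 0) : (KS n s)ᵀ * Dm n s = 1 := by
  rw [KS_transpose_eq, Dm]
  simp only [add_mul, mul_add, smul_mul_assoc, mul_smul_comm, one_mul, mul_one,
    Em_mul_Em, Em_mul_Gm, Gm_mul_Em, Gm_mul_Gm, smul_zero, add_zero, smul_smul]
  match_scalars <;> field_simp <;> ring

theorem KST_inv (n : ℕ) (s : ℂ) (hs : s ≠ 0) : ((KS n s)ᵀ)⁻¹ = Dm n s :=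
  inv_eq_right_inv (KST_mul_Dm n s hs)

theorem Dm_eq (n : ℕ) (s : ℂ) (hs : s ≠ 0) :
    Dm n s = (s ^ 2) • KS n s - (s ^ 3 - s⁻¹) • Pmat n := by
  rw [Dm, KS_eq, P_eq]
  match_scalars <;> field_simp <;> ring


theorem scal_mul (X Y : Matrix (Fin n × Fin n) (Fin n × Fin n) ℂ) :
    (scal (X * Y) : Matrix (Fin n × Fin n) (Fin n × Fin n) A) = scal X * scal Y := by
  simp [scal, _root_.Matrix.map_mul]

theorem scal_one :
    (scal 1 : Matrix (Fin n × Fin n) (Fin n × Fin n) A) = 1 :=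
  _root_.Matrix.map_one _ (_root_.map_zero _) (_root_.map_one _)

theorem scal_smul (a : ℂ) (X : Matrix (Fin n × Fin n) (Fin n × Fin n) ℂ) :
    (scal (a • X) : Matrix (Fin n × Fin n) (Fin n × Fin n) A) = a • scal X := by
  ext p q
  simp only [scal, Matrix.map_apply, Matrix.smul_apply, smul_eq_mul, _root_.map_mul]
  rw [Algebra.smul_def]

theorem scal_sub (X Y : Matrix (Fin n × Fin n) (Fin n × Fin n) ℂ) :
    (scal (X - Y) : Matrix (Fin n × Fin n) (Fin n × Fin n) A) = scal X - scal Y := by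
  ext p q
  simp [scal, Matrix.map_apply, map_sub]

theorem leg1_mul (M N : Matrix (Fin n) (Fin n) A) :
    leg1 (M * N) = leg1 M * leg1 N := by
  ext ⟨a,b⟩ ⟨c,d⟩
  simp only [leg1, Matrix.mul_apply, Fintype.sum_prod_type, ite_mul, mul_ite, zero_mul,
    mul_zero, Finset.sum_ite_eq, Finset.mem_univ, if_true]
  by_cases h : b = d <;> simp [h]

theorem leg2_mul (M N : Matrix (Fin n) (Fin n) A) :
    leg2 (M * N) = leg2 M * leg2 N := by
  ext ⟨a,b⟩ ⟨c,d⟩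
  simp only [leg2, Matrix.mul_apply, Fintype.sum_prod_type, ite_mul, mul_ite, zero_mul,
    mul_zero, Finset.sum_ite_eq, Finset.mem_univ, if_true]
  by_cases h : a = c <;> simp [h]

theorem Pswap (M : Matrix (Fin n) (Fin n) A) :
    leg1 M * (scal (Pmat n) : Matrix (Fin n × Fin n) (Fin n × Fin n) A) =
      scal (Pmat n) * leg2 M := by
  ext ⟨a,b⟩ ⟨c,d⟩
  simp only [leg1, leg2, scal, Pmat, Matrix.mul_apply, Matrix.map_apply,
    Fintype.sum_prod_type, apply_ite (algebraMap ℂ A), _root_.map_one, _root_.map_zero,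
    ite_mul, mul_ite, zero_mul, mul_zero, mul_one, one_mul, ite_and,
    Finset.sum_ite_eq, Finset.sum_ite_eq', Finset.mem_univ, if_true]
  by_cases h : b = c <;> simp [h]


theorem key {B : Type*} [Ring B] [Algebra ℂ B] (c₁ c₂ : ℂ)
    (Rm Ri Rt Rti Pm a1 a2 a3 b2 b3 : B)
    (hRiR : Ri * Rm = 1) (hRtRti : Rt * Rti = 1)
    (hD : Rti = c₁ • Rm - c₂ • Pm)
    (h12 : a1 * Rm * b2 * Ri = Rm * b2 * Ri * a1)
    (h13 : a1 * Rm * b3 * Ri = Rm * b3 * Ri * a1)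
    (h23 : a2 * Rm * b3 * Ri = Rm * b3 * Ri * a2)
    (h2self : a2 * Rti * b2 * Rt = Rm * b2 * Ri * a2)
    (hP3 : Pm * b3 = a3 * Pm) :
    a1 * a2 * Rti * (b2 * b3) =
      c₁ • (Rm * (b2 * b3) * Ri * (a1 * a2) * Rm) -
      c₂ • (Rm * b2 * Ri * (a1 * a2 * a3) * Pm) := by
  have hRiR' : ∀ x : B, Ri * (Rm * x) = x := fun x => by rw [← mul_assoc, hRiR, one_mul]
  have hRtRti' : ∀ x : B, Rt * (Rti * x) = x := fun x => by rw [← mul_assoc, hRtRti, one_mul]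
  have h12' : ∀ x : B, a1 * (Rm * (b2 * (Ri * x))) = Rm * (b2 * (Ri * (a1 * x))) := by
    intro x; have h := congrArg (· * x) h12; simpa only [mul_assoc] using h
  have h13' : ∀ x : B, a1 * (Rm * (b3 * (Ri * x))) = Rm * (b3 * (Ri * (a1 * x))) := by
    intro x; have h := congrArg (· * x) h13; simpa only [mul_assoc] using h
  have h23' : a2 * (Rm * b3) = Rm * (b3 * (Ri * (a2 * Rm))) := by
    have h := congrArg (· * Rm) h23
    simp only [mul_assoc] at h
    rw [hRiR, mul_one] at h
    exact h
  have h2s' : ∀ x : B, a2 * (Rti * (b2 * x)) = Rm * (b2 * (Ri * (a2 * (Rti * x)))) := by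
    intro x
    have h := congrArg (· * (Rti * x)) h2self
    simp only [mul_assoc] at h
    rw [hRtRti' x] at h
    exact h
  have h1_23 : ∀ x : B, a1 * (Rm * (b2 * (b3 * (Ri * x)))) =
      Rm * (b2 * (b3 * (Ri * (a1 * x)))) := by
    intro x
    have step1 := h12' (Rm * (b3 * (Ri * x)))
    rw [hRiR'] at step1
    rw [h13' x] at step1
    rw [hRiR'] at step1
    exact step1
  calc a1 * a2 * Rti * (b2 * b3)
      = a1 * (a2 * (Rti * (b2 * b3))) := by simp only [mul_assoc]
    _ = a1 * (Rm * (b2 * (Ri * (a2 * (Rti * b3))))) := by rw [h2s']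
    _ = a1 * (Rm * (b2 * (Ri * (a2 * ((c₁ • Rm - c₂ • Pm) * b3))))) := by rw [hD]
    _ = c₁ • (a1 * (Rm * (b2 * (Ri * (a2 * (Rm * b3)))))) -
        c₂ • (a1 * (Rm * (b2 * (Ri * (a2 * (Pm * b3)))))) := by
          simp only [sub_mul, smul_mul_assoc, mul_sub, mul_smul_comm]
    _ = c₁ • (Rm * (b2 * (b3 * (Ri * (a1 * (a2 * Rm)))))) -
        c₂ • (Rm * (b2 * (Ri * (a1 * (a2 * (a3 * Pm)))))) := by
          rw [h23', hRiR', h1_23, hP3, h12']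
    _ = c₁ • (Rm * (b2 * b3) * Ri * (a1 * a2) * Rm) -
        c₂ • (Rm * b2 * Ri * (a1 * a2 * a3) * Pm) := by simp only [mul_assoc]

end IHXaux

/-- Let `M₍₁₎, M₍₂₎, M₍₃₎` satisfy
`(M₍ᵢ₎)₁ R (M₍ⱼ₎)₂ R⁻¹ = R (M₍ⱼ₎)₂ R⁻¹ (M₍ᵢ₎)₁` for `i < j` and
`(M₍ᵢ₎)₁ R^{-T} (M₍ᵢ₎)₂ Rᵀ = R (M₍ᵢ₎)₂ R⁻¹ (M₍ᵢ₎)₁` for each `i`, where `R = R₁₂(q)`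
is the Kulish–Sklyanin matrix (`s = q^{1/2}`).  Then the IHX-type identity holds:
`(M₍₁₎M₍₂₎)₁ R^{-T} (M₍₂₎M₍₃₎)₂
  = q R (M₍₂₎M₍₃₎)₂ R⁻¹ (M₍₁₎M₍₂₎)₁ R − (q^{3/2}−q^{-1/2}) R (M₍₂₎)₂ R⁻¹ (M₍₁₎M₍₂₎M₍₃₎)₁ P₁₂`. -/
theorem IHX_relation (s : ℂ) (hs : s ≠ 0)
    (M1 M2 M3 : Matrix (Fin n) (Fin n) A)
    (hij : ∀ Mi Mj, (Mi = M1 ∧ Mj = M2) ∨ (Mi = M1 ∧ Mj = M3) ∨ (Mi = M2 ∧ Mj = M3) →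
      leg1 Mi * scal (KS n s) * leg2 Mj * scal (KS n s)⁻¹ =
        scal (KS n s) * leg2 Mj * scal (KS n s)⁻¹ * leg1 Mi)
    (hself : ∀ Mi ∈ ({M1, M2, M3} : Set (Matrix (Fin n) (Fin n) A)),
      leg1 Mi * scal ((KS n s)ᵀ)⁻¹ * leg2 Mi * scal (KS n s)ᵀ =
        scal (KS n s) * leg2 Mi * scal (KS n s)⁻¹ * leg1 Mi) :
    leg1 (M1 * M2) * scal ((KS n s)ᵀ)⁻¹ * leg2 (M2 * M3) =
      (s ^ 2 : ℂ) • (scal (KS n s) * leg2 (M2 * M3) * scal (KS n s)⁻¹ *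
          leg1 (M1 * M2) * scal (KS n s)) -
      (s ^ 3 - s⁻¹ : ℂ) • (scal (KS n s) * leg2 M2 * scal (KS n s)⁻¹ *
          leg1 (M1 * M2 * M3) * scal (Pmat n)) := by
  
  have h12 := hij M1 M2 (Or.inl ⟨rfl, rfl⟩)
  have h13 := hij M1 M3 (Or.inr (Or.inl ⟨rfl, rfl⟩))
  have h23 := hij M2 M3 (Or.inr (Or.inr ⟨rfl, rfl⟩))
  have h2self := hself M2 (by simp)
  have hRiR : (scal ((KS n s)⁻¹) : Matrix (Fin n × Fin n) (Fin n × Fin n) A) *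
      scal (KS n s) = 1 := by
    rw [← IHXaux.scal_mul, IHXaux.KS_inv n s hs, IHXaux.Cm_mul_KS n s hs, IHXaux.scal_one]
  have hRtRti : (scal ((KS n s)ᵀ) : Matrix (Fin n × Fin n) (Fin n × Fin n) A) *
      scal (((KS n s)ᵀ)⁻¹) = 1 := by
    rw [← IHXaux.scal_mul, IHXaux.KST_inv n s hs, IHXaux.KST_mul_Dm n s hs, IHXaux.scal_one]
  have hD : (scal (((KS n s)ᵀ)⁻¹) : Matrix (Fin n × Fin n) (Fin n × Fin n) A)
      = (s ^ 2 : ℂ) • scal (KS n s) - (s ^ 3 - s⁻¹ : ℂ) • scal (Pmat n) := by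
    rw [IHXaux.KST_inv n s hs, IHXaux.Dm_eq n s hs, IHXaux.scal_sub, IHXaux.scal_smul,
      IHXaux.scal_smul]
  have hP3 : (scal (Pmat n) : Matrix (Fin n × Fin n) (Fin n × Fin n) A) * leg2 M3 =
      leg1 M3 * scal (Pmat n) := (IHXaux.Pswap M3).symm
  simp only [IHXaux.leg1_mul, IHXaux.leg2_mul]
  exact IHXaux.key (s ^ 2) (s ^ 3 - s⁻¹) (scal (KS n s)) (scal ((KS n s)⁻¹))
    (scal ((KS n s)ᵀ)) (scal (((KS n s)ᵀ)⁻¹)) (scal (Pmat n))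
    (leg1 M1) (leg1 M2) (leg1 M3) (leg2 M2) (leg2 M3)
    hRiR hRtRti hD h12 h13 h23 h2self hP3
end
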